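/- Fix a real s ≥ 1 and consider the instance of the favorite-machine scheduling game on two machines with parameter s consisting of four jobs: job A of size (s² + s)/(s² + s + 1) with favorite machine 2; job B of size 1/(s(s² + s + 1)) with favorite machine 1; job C of size s²/(s² + s + 1) with favorite machine 1; and job D of size (s + 1)/(s² + s + 1) with favorite machine 1. Then the allocation assigning A and D to machine 1 and B and C to machine 2 is a pure Nash equilibrium whose makespan equals (s³ + s² + s + 1)/(s² + s + 1), while the optimal makespan of this instance is at most 1. Consequently, the price of anarchy at parameter s is at least (s³ + s² + s + 1)/(s² + s + 1). -/

import Mathlib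

open Finset

/-- Processing time of job `j` on machine `i` in the favorite-machine model:
`q j` on the favorite machine `f j` and `s * q j` on the other machine. -/
noncomputable def ptime (s : ℝ) {n : ℕ} (q : Fin n → ℝ) (f : Fin n → Fin 2)
    (i : Fin 2) (j : Fin n) : ℝ :=
  if f j = i then q j else s * q j

/-- Load of machine `i` under allocation `x`. -/
noncomputable def load (s : ℝ) {n : ℕ} (q : Fin n → ℝ) (f : Fin n → Fin 2)
    (x : Fin n → Fin 2) (i : Fin 2) : ℝ :=
  ∑ j ∈ Finset.univ.filter (fun j => x j = i), ptime s q f i j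

/-- Makespan (maximum load) of allocation `x`. -/
noncomputable def makespan (s : ℝ) {n : ℕ} (q : Fin n → ℝ) (f : Fin n → Fin 2)
    (x : Fin n → Fin 2) : ℝ :=
  max (load s q f x 0) (load s q f x 1)

/-- The optimal (minimum) makespan over all allocations. -/
noncomputable def optMakespan (s : ℝ) {n : ℕ} (q : Fin n → ℝ) (f : Fin n → Fin 2) : ℝ :=
  ⨅ y : Fin n → Fin 2, makespan s q f y

/-- Pure Nash equilibrium: no job can move to the other machine and find there
a load smaller than its current cost. -/
def IsNE (s : ℝ) {n : ℕ} (q : Fin n → ℝ) (f : Fin n → Fin 2)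
    (x : Fin n → Fin 2) : Prop :=
  ∀ j : Fin n, ∀ i : Fin 2, i ≠ x j →
    load s q f x (x j) ≤ load s q f (Function.update x j i) i

/-- Strong equilibrium: for every deviation `y` differing from `x` on a nonempty
set of jobs, some deviating job does not improve its cost. -/
def IsSE (s : ℝ) {n : ℕ} (q : Fin n → ℝ) (f : Fin n → Fin 2)
    (x : Fin n → Fin 2) : Prop :=
  ∀ y : Fin n → Fin 2, (∃ j, y j ≠ x j) →
    ∃ j, y j ≠ x j ∧ load s q f x (x j) ≤ load s q f y (y j)

/-! With `T = s² + s + 1`, the equilibrium loads are `(s³ + s² + s + 1)/T` on machine 1 and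
`(s³ + 1)/T` on machine 2. The gap is exactly `q_A = s·q_D`, which is what A or D would add to
machine 2 by moving, so neither gains; B and C already sit on the lighter machine. Putting A and B
on machine 2 and C and D on machine 1 gives both machines load `1`, hence `opt ≤ 1`. -/

section General

variable {s : ℝ} {n : ℕ} {q : Fin n → ℝ} {f : Fin n → Fin 2}

theorem ptime_nonneg (hs : 0 ≤ s) (hq : ∀ j, 0 ≤ q j) (i : Fin 2) (j : Fin n) :
    0 ≤ ptime s q f i j := by
  unfold ptime
  split_ifs
  exacts [hq j, mul_nonneg hs (hq j)]

theorem load_nonneg (hs : 0 ≤ s) (hq : ∀ j, 0 ≤ q j) (x : Fin n → Fin 2) (i : Fin 2) :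
    0 ≤ load s q f x i :=
  Finset.sum_nonneg fun j _ => ptime_nonneg hs hq i j

theorem optMakespan_le_makespan (hs : 0 ≤ s) (hq : ∀ j, 0 ≤ q j) (y : Fin n → Fin 2) :
    optMakespan s q f ≤ makespan s q f y :=
  ciInf_le ⟨0, by
    rintro _ ⟨z, rfl⟩
    exact (load_nonneg hs hq z 0).trans (le_max_left _ _)⟩ y

theorem load_update_of_ne {x : Fin n → Fin 2} {j : Fin n} {i : Fin 2} (h : i ≠ x j) :
    load s q f (Function.update x j i) i = load s q f x i + ptime s q f i j := by
  have hfilter : Finset.univ.filter (fun k => Function.update x j i k = i) =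
      insert j (Finset.univ.filter (fun k => x k = i)) := by
    ext k
    by_cases hk : k = j
    · subst hk; simp
    · simp [hk]
  rw [load, load, hfilter, Finset.sum_insert (by simp [Ne.symm h]), add_comm]

theorem isNE_iff {x : Fin n → Fin 2} :
    IsNE s q f x ↔ ∀ j i, i ≠ x j → load s q f x (x j) ≤ load s q f x i + ptime s q f i j := by
  refine forall_congr' fun j => forall_congr' fun i => ?_
  exact forall_congr' fun h => by rw [load_update_of_ne h]

end General

namespace LowerBoundInstance

noncomputable def size (s : ℝ) : Fin 4 → ℝ :=
  ![(s^2 + s)/(s^2 + s + 1), 1/(s*(s^2 + s + 1)), s^2/(s^2 + s + 1), (s + 1)/(s^2 + s + 1)]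

def favorite : Fin 4 → Fin 2 := ![1, 0, 0, 0]

def equilibrium : Fin 4 → Fin 2 := ![0, 1, 1, 0]

def optimum : Fin 4 → Fin 2 := ![1, 1, 0, 0]

variable {s : ℝ}

theorem size_nonneg (hs : 0 ≤ s) (j : Fin 4) : 0 ≤ size s j := by
  fin_cases j <;> simp [size] <;> positivity

theorem load_equilibrium_zero :
    load s (size s) favorite equilibrium 0 = (s^3 + s^2 + s + 1)/(s^2 + s + 1) := by
  rw [load, Finset.sum_filter, Fin.sum_univ_four]
  simp [ptime, size, favorite, equilibrium]
  ring

theorem load_equilibrium_one (hs : s ≠ 0) :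
    load s (size s) favorite equilibrium 1 = (s^3 + 1)/(s^2 + s + 1) := by
  rw [load, Finset.sum_filter, Fin.sum_univ_four]
  simp [ptime, size, favorite, equilibrium]
  field_simp
  ring

theorem load_equilibrium_gap (hs : s ≠ 0) :
    load s (size s) favorite equilibrium 0 = load s (size s) favorite equilibrium 1 + size s 0 := by
  rw [load_equilibrium_zero, load_equilibrium_one hs]
  simp only [size, Matrix.cons_val_zero]
  ring

theorem makespan_equilibrium (hs : 0 < s) :
    makespan s (size s) favorite equilibrium = (s^3 + s^2 + s + 1)/(s^2 + s + 1) := by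
  rw [makespan, max_eq_left, load_equilibrium_zero]
  linarith [load_equilibrium_gap hs.ne', size_nonneg hs.le 0]

theorem load_optimum (hs : 0 < s) (i : Fin 2) : load s (size s) favorite optimum i = 1 := by
  rw [load, Finset.sum_filter, Fin.sum_univ_four]
  fin_cases i <;> simp [ptime, size, favorite, optimum] <;> field_simp
  ring

theorem makespan_optimum (hs : 0 < s) : makespan s (size s) favorite optimum = 1 := by
  simp [makespan, load_optimum hs]

theorem isNE_equilibrium (hs : 0 < s) : IsNE s (size s) favorite equilibrium := by
  have hgap := load_equilibrium_gap hs.ne'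
  set L := load s (size s) favorite equilibrium
  have hmoveA : ptime s (size s) favorite 1 0 = size s 0 := if_pos rfl
  have hmoveD : ptime s (size s) favorite 1 3 = size s 0 := by
    simp [ptime, favorite, size]
    field_simp
  have hsize := size_nonneg hs.le
  have hptime := ptime_nonneg (f := favorite) hs.le hsize
  have hA : L 0 ≤ L 1 + ptime s (size s) favorite 1 0 := by rw [hgap, hmoveA]
  have hB : L 1 ≤ L 0 + ptime s (size s) favorite 0 1 := by linarith [hptime 0 1, hsize 0]
  have hC : L 1 ≤ L 0 + ptime s (size s) favorite 0 2 := by linarith [hptime 0 2, hsize 0]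
  have hD : L 0 ≤ L 1 + ptime s (size s) favorite 1 3 := by rw [hgap, hmoveD]
  rw [isNE_iff]
  intro j i hi
  fin_cases j <;> fin_cases i <;> first | exact absurd rfl hi | assumption

end LowerBoundInstance

open LowerBoundInstance

theorem poa_lower_bound
    (s : ℝ) (hs : 1 ≤ s)
    (q : Fin 4 → ℝ) (hq : q = ![(s^2 + s)/(s^2 + s + 1), 1/(s*(s^2 + s + 1)), s^2/(s^2 + s + 1), (s + 1)/(s^2 + s + 1)])
    (f : Fin 4 → Fin 2) (hf : f = ![1, 0, 0, 0])
    (x : Fin 4 → Fin 2) (hx : x = ![0, 1, 1, 0]) :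
    IsNE s q f x ∧
      makespan s q f x = (s^3 + s^2 + s + 1)/(s^2 + s + 1) ∧
      optMakespan s q f ≤ 1 ∧
      ((s^3 + s^2 + s + 1)/(s^2 + s + 1)) * optMakespan s q f ≤ makespan s q f x := by
  obtain rfl : q = size s := hq
  obtain rfl : f = favorite := hf
  obtain rfl : x = equilibrium := hx
  have hs0 : 0 < s := by linarith
  have hmakespan := makespan_equilibrium hs0
  have hopt :=
    (optMakespan_le_makespan hs0.le (size_nonneg hs0.le) optimum).trans_eq (makespan_optimum hs0)
  refine ⟨isNE_equilibrium hs0, hmakespan, hopt, ?_⟩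
  rw [hmakespan]
  exact mul_le_of_le_one_right (by positivity) hopt
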